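/- arXiv:1908.02549 — 8 statements merged into one kernel-verified Lean document; each statement's English description precedes it below -/
import Mathlib

section
/- If H : g → h is a crossed homomorphism with respect to an action ρ : g → Der(h), then the map ρ_H : g → gl(h) defined by ρ_H(x)(u) = ρ(x)(u) + [H(x), u]_h is a Lie algebra homomorphism from g to Der(h), i.e. ρ_H is again an action of g on h. -/
section TwistedDerivation

variable {L : Type*} [LieRing L]

theorem leibniz_add_ad {D : L → L} (hD : ∀ u v, D ⁅u, v⁆ = ⁅D u, v⁆ + ⁅u, D v⁆) (a u v : L) :
    D ⁅u, v⁆ + ⁅a, ⁅u, v⁆⁆ = ⁅D u + ⁅a, u⁆, v⁆ + ⁅u, D v + ⁅a, v⁆⁆ := by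
  rw [hD, leibniz_lie, add_lie, lie_add]
  abel

theorem apply_lie_sub_lie_apply {D : L → L} (hD : ∀ u v, D ⁅u, v⁆ = ⁅D u, v⁆ + ⁅u, D v⁆)
    (a u : L) : D ⁅a, u⁆ - ⁅a, D u⁆ = ⁅D a, u⁆ := by
  rw [hD, add_sub_cancel_right]

variable {F : Type*} [FunLike F L L] [AddMonoidHomClass F L L]

/-- `⁅D + ad a, E + ad b⁆ = ⁅D, E⁆ + ad (D b - E a + ⁅a, b⁆)` for derivations `D`, `E`. -/
theorem commutator_add_ad {D E : F} (hD : ∀ u v, D ⁅u, v⁆ = ⁅D u, v⁆ + ⁅u, D v⁆)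
    (hE : ∀ u v, E ⁅u, v⁆ = ⁅E u, v⁆ + ⁅u, E v⁆) (a b u : L) :
    (D (E u + ⁅b, u⁆) + ⁅a, E u + ⁅b, u⁆⁆) - (E (D u + ⁅a, u⁆) + ⁅b, D u + ⁅a, u⁆⁆) =
      (D (E u) - E (D u)) + ⁅D b - E a + ⁅a, b⁆, u⁆ := by
  have hDb := apply_lie_sub_lie_apply hD b u
  have hEa := apply_lie_sub_lie_apply hE a u
  have hab : ⁅a, ⁅b, u⁆⁆ - ⁅b, ⁅a, u⁆⁆ = ⁅⁅a, b⁆, u⁆ := by rw [lie_lie]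
  rw [map_add, map_add, lie_add, lie_add, add_lie, sub_lie, ← hDb, ← hEa, ← hab]
  abel

end TwistedDerivation

theorem crossed_hom_twisted_action_general
    {K g h : Type*} [Field K]
    [LieRing g] [LieAlgebra K g] [LieRing h] [LieAlgebra K h]
    (ρ : g →ₗ[K] Module.End K h)
    (hder : ∀ (x : g) (u v : h), ρ x ⁅u, v⁆ = ⁅ρ x u, v⁆ + ⁅u, ρ x v⁆)
    (hhom : ∀ (x y : g) (u : h), ρ ⁅x, y⁆ u = ρ x (ρ y u) - ρ y (ρ x u))
    (H : g →ₗ[K] h)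
    (hH : ∀ x y : g, H ⁅x, y⁆ = ρ x (H y) - ρ y (H x) + ⁅H x, H y⁆) :
    (∀ (x : g) (u v : h),
      ρ x ⁅u, v⁆ + ⁅H x, ⁅u, v⁆⁆ =
        ⁅ρ x u + ⁅H x, u⁆, v⁆ + ⁅u, ρ x v + ⁅H x, v⁆⁆) ∧
    (∀ (x y : g) (u : h),
      ρ ⁅x, y⁆ u + ⁅H ⁅x, y⁆, u⁆ =
        (ρ x (ρ y u + ⁅H y, u⁆) + ⁅H x, ρ y u + ⁅H y, u⁆⁆) -
          (ρ y (ρ x u + ⁅H x, u⁆) + ⁅H y, ρ x u + ⁅H x, u⁆⁆)) :=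
  ⟨fun x => leibniz_add_ad (hder x) (H x), fun x y u => by
    rw [hhom, hH, commutator_add_ad (hder x) (hder y)]⟩

/-- If `H : g → h` is a crossed homomorphism with respect to an action
`ρ : g → Der(h)`, then `ρ_H (x) u = ρ x u + ⁅H x, u⁆` is again an action of `g` on `h`,
i.e. each `ρ_H x` is a derivation of `h` and `ρ_H` is a Lie algebra homomorphism. -/
theorem crossed_hom_twisted_action
    {K g h : Type*} [Field K] [CharZero K]
    [LieRing g] [LieAlgebra K g] [LieRing h] [LieAlgebra K h]
    (ρ : g →ₗ[K] Module.End K h)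
    (hder : ∀ (x : g) (u v : h), ρ x ⁅u, v⁆ = ⁅ρ x u, v⁆ + ⁅u, ρ x v⁆)
    (hhom : ∀ (x y : g) (u : h), ρ ⁅x, y⁆ u = ρ x (ρ y u) - ρ y (ρ x u))
    (H : g →ₗ[K] h)
    (hH : ∀ x y : g, H ⁅x, y⁆ = ρ x (H y) - ρ y (H x) + ⁅H x, H y⁆) :
    (∀ (x : g) (u v : h),
      ρ x ⁅u, v⁆ + ⁅H x, ⁅u, v⁆⁆ =
        ⁅ρ x u + ⁅H x, u⁆, v⁆ + ⁅u, ρ x v + ⁅H x, v⁆⁆) ∧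
    (∀ (x y : g) (u : h),
      ρ ⁅x, y⁆ u + ⁅H ⁅x, y⁆, u⁆ =
        (ρ x (ρ y u + ⁅H y, u⁆) + ⁅H x, ρ y u + ⁅H y, u⁆⁆) -
          (ρ y (ρ x u + ⁅H x, u⁆) + ⁅H y, ρ x u + ⁅H x, u⁆⁆)) :=
  crossed_hom_twisted_action_general ρ hder hhom H hH
end

section
/- Let ρ be an action of g on h and H : g → h a linear map such that ρ_H(x)(u) := ρ(x)(u) + [H x, u]_h defines an action of g on h. Then the linear map Ĥ : g ⋉_{ρ_H} h → g ⋉_ρ h defined by Ĥ(x,u) = (x, H x + u) is a Lie algebra isomorphism if and only if H is a crossed homomorphism with respect to ρ. -/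
/-- The semidirect product bracket on `g × h` determined by a map `σ : g → h → h`. -/
def sdBracket {g h : Type*} [LieRing g] [LieRing h]
    (σ : g → h → h) (p q : g × h) : g × h :=
  (⁅p.1, q.1⁆, σ p.1 q.2 - σ q.1 p.2 + ⁅p.2, q.2⁆)

/-- The map `Ĥ (x, u) = (x, H x + u)`. -/
def hatMap {K g h : Type*} [Field K]
    [LieRing g] [LieAlgebra K g] [LieRing h] [LieAlgebra K h]
    (H : g →ₗ[K] h) (p : g × h) : g × h :=
  (p.1, H p.1 + p.2)

section

variable {K g h : Type*} [Field K] [LieRing g] [LieAlgebra K g] [LieRing h] [LieAlgebra K h]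

theorem hatMap_bijective (H : g →ₗ[K] h) : Function.Bijective (hatMap H) := by
  refine ⟨fun p q hpq => ?_, fun p => ⟨(p.1, p.2 - H p.1), by simp [hatMap]⟩⟩
  obtain ⟨h1, h2⟩ := Prod.ext_iff.mp hpq
  simp only [hatMap] at h1 h2
  rw [h1] at h2
  exact Prod.ext h1 (add_left_cancel h2)

/-- All terms involving `p.2`, `q.2` cancel: `⁅p.2, H q.1⁆` on the right is matched by
`-⁅H q.1, p.2⁆` coming from `ρ_H`. -/
theorem hatMap_sdBracket_eq_iff (ρ : g →ₗ[K] Module.End K h) (H : g →ₗ[K] h) (p q : g × h) :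
    hatMap H (sdBracket (fun x u => ρ x u + ⁅H x, u⁆) p q) =
        sdBracket (fun x u => ρ x u) (hatMap H p) (hatMap H q) ↔
      H ⁅p.1, q.1⁆ = ρ p.1 (H q.1) - ρ q.1 (H p.1) + ⁅H p.1, H q.1⁆ := by
  simp only [hatMap, sdBracket, Prod.ext_iff, true_and, map_add, lie_add, add_lie]
  rw [← lie_skew (H q.1) p.2]
  constructor <;> intro h <;> linear_combination (norm := abel) h

end

theorem hatMap_iso_iff_crossed_hom_general
    {K g h : Type*} [Field K]
    [LieRing g] [LieAlgebra K g] [LieRing h] [LieAlgebra K h]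
    (ρ : g →ₗ[K] Module.End K h)
    (H : g →ₗ[K] h) :
    (Function.Bijective (hatMap H) ∧
      ∀ p q : g × h,
        hatMap H (sdBracket (fun x u => ρ x u + ⁅H x, u⁆) p q) =
          sdBracket (fun x u => ρ x u) (hatMap H p) (hatMap H q)) ↔
      ∀ x y : g, H ⁅x, y⁆ = ρ x (H y) - ρ y (H x) + ⁅H x, H y⁆ := by
  constructor
  · rintro ⟨-, hbracket⟩ x y
    exact (hatMap_sdBracket_eq_iff ρ H (x, 0) (y, 0)).mp (hbracket _ _)
  · intro hcrossed
    exact ⟨hatMap_bijective H, fun p q =>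
      (hatMap_sdBracket_eq_iff ρ H p q).mpr (hcrossed p.1 q.1)⟩

/-- if `ρ_H` (given by `ρ_H x u = ρ x u + ⁅H x, u⁆`) is an action of `g`
on `h`, then `Ĥ : g ⋉_{ρ_H} h → g ⋉_ρ h`, `Ĥ(x,u) = (x, H x + u)`, is a Lie algebra
isomorphism if and only if `H` is a crossed homomorphism with respect to `ρ`. -/
theorem hatMap_iso_iff_crossed_hom
    {K g h : Type*} [Field K] [CharZero K]
    [LieRing g] [LieAlgebra K g] [LieRing h] [LieAlgebra K h]
    (ρ : g →ₗ[K] Module.End K h)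
    (hder : ∀ (x : g) (u v : h), ρ x ⁅u, v⁆ = ⁅ρ x u, v⁆ + ⁅u, ρ x v⁆)
    (hhom : ∀ (x y : g) (u : h), ρ ⁅x, y⁆ u = ρ x (ρ y u) - ρ y (ρ x u))
    (H : g →ₗ[K] h)
    (hρHder : ∀ (x : g) (u v : h),
      ρ x ⁅u, v⁆ + ⁅H x, ⁅u, v⁆⁆ =
        ⁅ρ x u + ⁅H x, u⁆, v⁆ + ⁅u, ρ x v + ⁅H x, v⁆⁆)
    (hρHhom : ∀ (x y : g) (u : h),
      ρ ⁅x, y⁆ u + ⁅H ⁅x, y⁆, u⁆ =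
        (ρ x (ρ y u + ⁅H y, u⁆) + ⁅H x, ρ y u + ⁅H y, u⁆⁆) -
          (ρ y (ρ x u + ⁅H x, u⁆) + ⁅H y, ρ x u + ⁅H x, u⁆⁆)) :
    (Function.Bijective (hatMap H) ∧
      ∀ p q : g × h,
        hatMap H (sdBracket (fun x u => ρ x u + ⁅H x, u⁆) p q) =
          sdBracket (fun x u => ρ x u) (hatMap H p) (hatMap H q)) ↔
      ∀ x y : g, H ⁅x, y⁆ = ρ x (H y) - ρ y (H x) + ⁅H x, H y⁆ :=
  hatMap_iso_iff_crossed_hom_general ρ H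
end

section
/- Let (A, L, [·,·]_L, α) be a Lie-Rinehart algebra, (M; ρ) a weak representation of L, g a K-Lie algebra and (V; θ) a representation of g. Then the map (ρ ⊞ θ) : L ⋉_α (g ⊗_K A) → gl_K(V ⊗_K M) defined by (ρ ⊞ θ)(x, g⊗a)(v⊗m) = v ⊗ ρ(x)m + θ(g)v ⊗ am is a weak representation of the semidirect product Lie-Rinehart algebra L ⋉_α (g ⊗_K A) on the A-module V ⊗_K M (where a(v⊗m) = v ⊗ am). -/
/-!
`(ρ ⊞ θ)(x, ξ)` is the sum of `id ⊗ ρ x` and `Φ ξ`, where `Φ (u ⊗ a) = θ u ⊗ (a • ·)`.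
The Leibniz rule of `ρ` says that the commutator of `id ⊗ ρ x` with `Φ (u ⊗ a)` is
`Φ (u ⊗ α x a)`, and because `A` is commutative `Φ` is a Lie homomorphism on `g ⊗ A` that
commutes with the `A`-action. Expanding the commutator of two sums then reproduces the
semidirect product bracket term by term, and only `id ⊗ ρ x` contributes to the anchor term.
-/

open scoped TensorProduct

section

variable {K A L gK V M : Type*} [Field K] [CharZero K]
  [CommRing A] [Algebra K A]
  [LieRing L] [LieAlgebra K L] [Module A L]
  [LieRing gK] [LieAlgebra K gK]
  [AddCommGroup V] [Module K V]
  [AddCommGroup M] [Module K M] [Module A M] [SMulCommClass A K M]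

def aSmul (a : A) : M →ₗ[K] M where
  toFun m := a • m
  map_add' := smul_add a
  map_smul' c m := smul_comm a c m

end

theorem LinearMap.lTensor_lie {R N P : Type*} [CommRing R] [AddCommGroup N] [Module R N]
    [AddCommGroup P] [Module R P] (f g : Module.End R N) :
    lTensor P ⁅f, g⁆ = ⁅lTensor P f, lTensor P g⁆ := by
  simp only [Ring.lie_def, lTensor_sub, lTensor_mul]

section

variable {K A G V M : Type*} [CommRing K] [CommRing A] [Algebra K A]
  [AddCommGroup V] [Module K V] [AddCommGroup M] [Module K M] [Module A M]

theorem map_act_eq_lie_lTensor [AddCommGroup G] [Module K G] {f : Module.End K M}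
    {δ : Module.End K A} (hf : ∀ (a : A) (m : M), f (a • m) = a • f m + δ a • m)
    {θ : G →ₗ[K] Module.End K V} {act : G ⊗[K] A →ₗ[K] G ⊗[K] A}
    (hact : ∀ u a, act (u ⊗ₜ a) = u ⊗ₜ δ a) {Φ : G ⊗[K] A →ₗ[K] Module.End K (V ⊗[K] M)}
    (hΦ : ∀ u a v m, Φ (u ⊗ₜ a) (v ⊗ₜ m) = θ u v ⊗ₜ (a • m)) (η : G ⊗[K] A) :
    Φ (act η) = ⁅LinearMap.lTensor V f, Φ η⁆ := by
  induction η using TensorProduct.induction_on with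
  | zero => simp [Ring.lie_def]
  | tmul u a =>
    refine TensorProduct.ext' fun v m => ?_
    simp [Ring.lie_def, hact, hΦ, hf, TensorProduct.tmul_add]
  | add η₁ η₂ h₁ h₂ =>
    simp only [map_add, h₁, h₂, Ring.lie_def]
    noncomm_ring

theorem map_bracket_eq_lie [LieRing G] [LieAlgebra K G] {θ : G →ₗ[K] Module.End K V}
    (hθ : ∀ (u w : G) (v : V), θ ⁅u, w⁆ v = θ u (θ w v) - θ w (θ u v))
    {br : G ⊗[K] A →ₗ[K] G ⊗[K] A →ₗ[K] G ⊗[K] A}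
    (hbr : ∀ (u w : G) (a b : A), br (u ⊗ₜ a) (w ⊗ₜ b) = ⁅u, w⁆ ⊗ₜ (a * b))
    {Φ : G ⊗[K] A →ₗ[K] Module.End K (V ⊗[K] M)}
    (hΦ : ∀ u a v m, Φ (u ⊗ₜ a) (v ⊗ₜ m) = θ u v ⊗ₜ (a • m)) (ξ η : G ⊗[K] A) :
    Φ (br ξ η) = ⁅Φ ξ, Φ η⁆ := by
  induction ξ using TensorProduct.induction_on with
  | zero => simp [Ring.lie_def]
  | add ξ₁ ξ₂ h₁ h₂ =>
    simp only [map_add, LinearMap.add_apply, h₁, h₂, Ring.lie_def]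
    noncomm_ring
  | tmul u a =>
    induction η using TensorProduct.induction_on with
    | zero => simp [Ring.lie_def]
    | add η₁ η₂ h₁ h₂ =>
      simp only [map_add, h₁, h₂, Ring.lie_def]
      noncomm_ring
    | tmul w b =>
      refine TensorProduct.ext' fun v m => ?_
      simp only [hbr, hΦ, Ring.lie_def, LinearMap.sub_apply, Module.End.mul_apply, hθ,
        TensorProduct.sub_tmul, smul_smul, mul_comm a b]

end

section

variable {K A G V M : Type*} [Field K] [CommRing A]
  [AddCommGroup V] [Module K V] [AddCommGroup M] [Module K M] [Module A M] [SMulCommClass A K M]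

theorem lie_lTensor_aSmul {f : Module.End K M} {a b : A}
    (hf : ∀ m, f (a • m) = a • f m + b • m) :
    ⁅LinearMap.lTensor V f, LinearMap.lTensor V (aSmul a)⁆ =
      LinearMap.lTensor V (aSmul b : Module.End K M) := by
  rw [← LinearMap.lTensor_lie]
  congr 1
  ext m
  simp [Ring.lie_def, aSmul, hf]

theorem commute_map_lTensor_aSmul [Algebra K A] [AddCommGroup G] [Module K G]
    {θ : G →ₗ[K] Module.End K V} {Φ : G ⊗[K] A →ₗ[K] Module.End K (V ⊗[K] M)}
    (hΦ : ∀ u a v m, Φ (u ⊗ₜ a) (v ⊗ₜ m) = θ u v ⊗ₜ (a • m)) (ξ : G ⊗[K] A) (a : A) :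
    Commute (Φ ξ) (LinearMap.lTensor V (aSmul a : Module.End K M)) := by
  induction ξ using TensorProduct.induction_on with
  | zero => simp
  | add ξ₁ ξ₂ h₁ h₂ => simpa using h₁.add_left h₂
  | tmul u b =>
    refine TensorProduct.ext' fun v m => ?_
    simp [aSmul, hΦ, smul_smul, mul_comm a b]

end

section

variable {K A L gK V M : Type*} [Field K] [CharZero K]
  [CommRing A] [Algebra K A]
  [LieRing L] [LieAlgebra K L] [Module A L]
  [LieRing gK] [LieAlgebra K gK]
  [AddCommGroup V] [Module K V]
  [AddCommGroup M] [Module K M] [Module A M] [SMulCommClass A K M]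

theorem boxplus_weak_representation_general
    (α : L →ₗ[K] Module.End K A)
    (ρ : L →ₗ[K] Module.End K M)
    (hρhom : ∀ (x y : L) (m : M), ρ ⁅x, y⁆ m = ρ x (ρ y m) - ρ y (ρ x m))
    (hρmod : ∀ (x : L) (a : A) (m : M), ρ x (a • m) = a • ρ x m + α x a • m)
    (θ : gK →ₗ[K] Module.End K V)
    (hθ : ∀ (u w : gK) (v : V), θ ⁅u, w⁆ v = θ u (θ w v) - θ w (θ u v))
    -- the Lie `A`-algebra bracket on `g ⊗ A`: `⁅u ⊗ a, w ⊗ b⁆ = ⁅u, w⁆ ⊗ ab`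
    (brG : (gK ⊗[K] A) →ₗ[K] (gK ⊗[K] A) →ₗ[K] (gK ⊗[K] A))
    (hbrG : ∀ (u w : gK) (a b : A), brG (u ⊗ₜ a) (w ⊗ₜ b) = ⁅u, w⁆ ⊗ₜ (a * b))
    -- the action of `L` on `g ⊗ A` through the anchor: `x · (u ⊗ a) = u ⊗ α x a`
    (actα : L → (gK ⊗[K] A) →ₗ[K] (gK ⊗[K] A))
    (hactα : ∀ (x : L) (u : gK) (a : A), actα x (u ⊗ₜ a) = u ⊗ₜ α x a)
    -- `Φ₂ (u ⊗ a) (v ⊗ m) = θ u v ⊗ a • m`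
    (Φ₂ : (gK ⊗[K] A) →ₗ[K] Module.End K (V ⊗[K] M))
    (hΦ₂ : ∀ (u : gK) (a : A) (v : V) (m : M),
      Φ₂ (u ⊗ₜ a) (v ⊗ₜ m) = θ u v ⊗ₜ (a • m)) :
    (∀ p q : L × (gK ⊗[K] A),
      (LinearMap.lTensor V (ρ ⁅p.1, q.1⁆) +
          Φ₂ (actα p.1 q.2 - actα q.1 p.2 + brG p.2 q.2)) =
        (LinearMap.lTensor V (ρ p.1) + Φ₂ p.2) * (LinearMap.lTensor V (ρ q.1) + Φ₂ q.2) -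
          (LinearMap.lTensor V (ρ q.1) + Φ₂ q.2) * (LinearMap.lTensor V (ρ p.1) + Φ₂ p.2)) ∧
    (∀ (p : L × (gK ⊗[K] A)) (a : A) (t : V ⊗[K] M),
      (LinearMap.lTensor V (ρ p.1) + Φ₂ p.2) (LinearMap.lTensor V (aSmul a) t) =
        LinearMap.lTensor V (aSmul a) ((LinearMap.lTensor V (ρ p.1) + Φ₂ p.2) t) +
          LinearMap.lTensor V (aSmul (α p.1 a)) t) := by
  have hρ (x y : L) : ρ ⁅x, y⁆ = ⁅ρ x, ρ y⁆ := LinearMap.ext (hρhom x y)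
  have hact (x : L) := map_act_eq_lie_lTensor (hρmod x) (hactα x) hΦ₂
  refine ⟨?_, ?_⟩
  · rintro ⟨x, ξ⟩ ⟨y, η⟩
    dsimp only
    rw [hρ, LinearMap.lTensor_lie, map_add, map_sub, hact, hact,
      map_bracket_eq_lie hθ hbrG hΦ₂]
    simp only [Ring.lie_def]
    noncomm_ring
  · rintro ⟨x, ξ⟩ a t
    have hρa := lie_lTensor_aSmul (V := V) (hρmod x a)
    rw [Ring.lie_def, sub_eq_iff_eq_add'] at hρa
    have h : (LinearMap.lTensor V (ρ x) + Φ₂ ξ) * LinearMap.lTensor V (aSmul a) =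
        LinearMap.lTensor V (aSmul a) * (LinearMap.lTensor V (ρ x) + Φ₂ ξ) +
          LinearMap.lTensor V (aSmul (α x a)) := by
      rw [add_mul, mul_add, hρa, (commute_map_lTensor_aSmul hΦ₂ ξ a).eq]
      abel
    exact LinearMap.congr_fun h t

/-- given a Lie–Rinehart algebra `(A, L, α)`, a weak representation
`(M; ρ)` of `L`, a `K`-Lie algebra `g` with representation `(V; θ)`, the map
`(ρ ⊞ θ)(x, g ⊗ a)(v ⊗ m) = v ⊗ ρ x m + θ g v ⊗ a • m` is a weak representation of
the semidirect product Lie–Rinehart algebra `L ⋉_α (g ⊗ A)` on the `A`-module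
`V ⊗ M` (with `a • (v ⊗ m) = v ⊗ a • m`): it is a Lie algebra homomorphism for the
semidirect product bracket and satisfies the weak representation compatibility with
the `A`-action and the anchor `(x, ξ) ↦ α x`. -/
theorem boxplus_weak_representation
    (α : L →ₗ[K] Module.End K A)
    (hαder : ∀ (x : L) (a b : A), α x (a * b) = α x a * b + a * α x b)
    (hαhom : ∀ (x y : L) (a : A), α ⁅x, y⁆ a = α x (α y a) - α y (α x a))
    (hαA : ∀ (a : A) (x : L) (b : A), α (a • x) b = a * α x b)
    (hLeib : ∀ (x y : L) (a : A), ⁅x, a • y⁆ = a • ⁅x, y⁆ + α x a • y)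
    (ρ : L →ₗ[K] Module.End K M)
    (hρhom : ∀ (x y : L) (m : M), ρ ⁅x, y⁆ m = ρ x (ρ y m) - ρ y (ρ x m))
    (hρmod : ∀ (x : L) (a : A) (m : M), ρ x (a • m) = a • ρ x m + α x a • m)
    (θ : gK →ₗ[K] Module.End K V)
    (hθ : ∀ (u w : gK) (v : V), θ ⁅u, w⁆ v = θ u (θ w v) - θ w (θ u v))
    -- the Lie `A`-algebra bracket on `g ⊗ A`: `⁅u ⊗ a, w ⊗ b⁆ = ⁅u, w⁆ ⊗ ab`
    (brG : (gK ⊗[K] A) →ₗ[K] (gK ⊗[K] A) →ₗ[K] (gK ⊗[K] A))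
    (hbrG : ∀ (u w : gK) (a b : A), brG (u ⊗ₜ a) (w ⊗ₜ b) = ⁅u, w⁆ ⊗ₜ (a * b))
    -- the action of `L` on `g ⊗ A` through the anchor: `x · (u ⊗ a) = u ⊗ α x a`
    (actα : L → (gK ⊗[K] A) →ₗ[K] (gK ⊗[K] A))
    (hactα : ∀ (x : L) (u : gK) (a : A), actα x (u ⊗ₜ a) = u ⊗ₜ α x a)
    -- `Φ₂ (u ⊗ a) (v ⊗ m) = θ u v ⊗ a • m`
    (Φ₂ : (gK ⊗[K] A) →ₗ[K] Module.End K (V ⊗[K] M))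
    (hΦ₂ : ∀ (u : gK) (a : A) (v : V) (m : M),
      Φ₂ (u ⊗ₜ a) (v ⊗ₜ m) = θ u v ⊗ₜ (a • m)) :
    (∀ p q : L × (gK ⊗[K] A),
      (LinearMap.lTensor V (ρ ⁅p.1, q.1⁆) +
          Φ₂ (actα p.1 q.2 - actα q.1 p.2 + brG p.2 q.2)) =
        (LinearMap.lTensor V (ρ p.1) + Φ₂ p.2) * (LinearMap.lTensor V (ρ q.1) + Φ₂ q.2) -
          (LinearMap.lTensor V (ρ q.1) + Φ₂ q.2) * (LinearMap.lTensor V (ρ p.1) + Φ₂ p.2)) ∧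
    (∀ (p : L × (gK ⊗[K] A)) (a : A) (t : V ⊗[K] M),
      (LinearMap.lTensor V (ρ p.1) + Φ₂ p.2) (LinearMap.lTensor V (aSmul a) t) =
        LinearMap.lTensor V (aSmul a) ((LinearMap.lTensor V (ρ p.1) + Φ₂ p.2) t) +
          LinearMap.lTensor V (aSmul (α p.1 a)) t) :=
  boxplus_weak_representation_general α ρ hρhom hρmod θ hθ brG hbrG actα hactα Φ₂ hΦ₂

end
end

section
/- Let (M; ρ) be an admissible representation of a Leibniz pair (A, S, [·,·]_S, β). Define ρ̄ : S ⊗_K A → gl_K(M) by ρ̄(x⊗a) = aρ(x). Then (M; ρ̄) is a representation of the action Lie-Rinehart algebra S ⊗_K A, i.e. ρ̄ is simultaneously an A-module homomorphism and a K-Lie algebra homomorphism into first order differential operators, with ρ̄(x⊗a)(bm) = b ρ̄(x⊗a)m + α(x⊗a)(b)m where α(x⊗a) = aβ(x). -/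
/-! All three identities are additive in the elements of `S ⊗ A`, so it suffices to check them on
pure tensors `x ⊗ a`. There they follow from the admissibility rule
`ρ x (a • m) = a • ρ x m + β x a • m`, commutativity of `A` and, for the bracket, from `ρ` being
a Lie homomorphism. -/

open scoped TensorProduct

namespace LeibnizPair

variable {K A S M : Type*} [CommRing K] [CommRing A] [Module K A] [LieRing S] [Module K S]
  [AddCommGroup M] [Module K M] [Module A M]
  {β : S →ₗ[K] Module.End K A} {ρ : S →ₗ[K] Module.End K M}

theorem smul_rep_apply_smul
    (hρmod : ∀ (x : S) (a : A) (m : M), ρ x (a • m) = a • ρ x m + β x a • m)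
    (x : S) (a b : A) (m : M) :
    a • ρ x (b • m) = b • a • ρ x m + (a * β x b) • m := by
  rw [hρmod, smul_add, smul_smul, smul_smul, smul_smul, mul_comm a b]

theorem smul_rep_commutator
    (hρhom : ∀ (x y : S) (m : M), ρ ⁅x, y⁆ m = ρ x (ρ y m) - ρ y (ρ x m))
    (hρmod : ∀ (x : S) (a : A) (m : M), ρ x (a • m) = a • ρ x m + β x a • m)
    (x y : S) (a b : A) (m : M) :
    (a * b) • ρ ⁅x, y⁆ m + (a * β x b) • ρ y m - (b * β y a) • ρ x m =
      a • ρ x (b • ρ y m) - b • ρ y (a • ρ x m) := by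
  rw [smul_rep_apply_smul hρmod, smul_rep_apply_smul hρmod, hρhom, smul_sub, smul_smul,
    smul_smul, mul_comm b a]
  abel

end LeibnizPair

theorem admissible_to_lieRinehart_rep_general
    {K A S M : Type*} [Field K]
    [CommRing A] [Algebra K A]
    [LieRing S] [LieAlgebra K S]
    [AddCommGroup M] [Module K M] [Module A M]
    (β : S →ₗ[K] Module.End K A)
    (ρ : S →ₗ[K] Module.End K M)
    (hρhom : ∀ (x y : S) (m : M), ρ ⁅x, y⁆ m = ρ x (ρ y m) - ρ y (ρ x m))
    (hρmod : ∀ (x : S) (a : A) (m : M), ρ x (a • m) = a • ρ x m + β x a • m)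
    -- the bracket on `S ⊗ A`
    (br : (S ⊗[K] A) →ₗ[K] (S ⊗[K] A) →ₗ[K] (S ⊗[K] A))
    (hbr : ∀ (x y : S) (a b : A),
      br (x ⊗ₜ a) (y ⊗ₜ b) =
        ⁅x, y⁆ ⊗ₜ (a * b) + y ⊗ₜ (a * β x b) - x ⊗ₜ (b * β y a))
    -- the `A`-module structure on `S ⊗ A`
    (mod : A → (S ⊗[K] A) →ₗ[K] (S ⊗[K] A))
    (hmod : ∀ (a : A) (x : S) (b : A), mod a (x ⊗ₜ b) = x ⊗ₜ (a * b))
    -- the anchor on `S ⊗ A`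
    (αm : (S ⊗[K] A) →ₗ[K] Module.End K A)
    (hαm : ∀ (x : S) (a b : A), αm (x ⊗ₜ a) b = a * β x b)
    -- the map `ρ̄ : S ⊗ A → gl_K(M)`, `ρ̄(x ⊗ a) = a ρ(x)`
    (ρb : (S ⊗[K] A) →ₗ[K] Module.End K M)
    (hρb : ∀ (x : S) (a : A) (m : M), ρb (x ⊗ₜ a) m = a • ρ x m) :
    (∀ (t s : S ⊗[K] A) (m : M), ρb (br t s) m = ρb t (ρb s m) - ρb s (ρb t m)) ∧
    (∀ (a : A) (t : S ⊗[K] A) (m : M), ρb (mod a t) m = a • ρb t m) ∧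
    (∀ (t : S ⊗[K] A) (b : A) (m : M), ρb t (b • m) = b • ρb t m + αm t b • m) := by
  refine ⟨fun t s m => ?_, fun a t m => ?_, fun t b m => ?_⟩
  · induction s using TensorProduct.induction_on with
    | zero => simp
    | add s₁ s₂ h₁ h₂ => simp only [map_add, LinearMap.add_apply, h₁, h₂]; abel
    | tmul y b =>
      induction t using TensorProduct.induction_on with
      | zero => simp
      | add t₁ t₂ h₁ h₂ => simp only [map_add, LinearMap.add_apply, h₁, h₂]; abel
      | tmul x a =>
        simp only [hbr, map_add, map_sub, LinearMap.add_apply, LinearMap.sub_apply, hρb]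
        exact LeibnizPair.smul_rep_commutator hρhom hρmod x y a b m
  · induction t using TensorProduct.induction_on with
    | zero => simp
    | add t₁ t₂ h₁ h₂ => simp only [map_add, LinearMap.add_apply, h₁, h₂, smul_add]
    | tmul x b => simp only [hmod, hρb, mul_smul]
  · induction t using TensorProduct.induction_on with
    | zero => simp
    | add t₁ t₂ h₁ h₂ =>
      simp only [map_add, LinearMap.add_apply, h₁, h₂, add_smul, smul_add]
      abel
    | tmul x a => simp only [hρb, hαm, LeibnizPair.smul_rep_apply_smul hρmod]

/-- if `(M; ρ)` is an admissible representation of a Leibniz pair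
`(A, S, β)` then `ρ̄ (x ⊗ a) = a ρ(x)` is a representation of the action Lie–Rinehart
algebra `S ⊗ A`: it is a Lie algebra homomorphism for the bracket of `S ⊗ A`, an
`A`-module homomorphism, and the first-order-differential-operator condition
`ρ̄(x⊗a)(b • m) = b • ρ̄(x⊗a) m + α(x⊗a)(b) • m` holds, where `α(x⊗a) = a β(x)`. -/
theorem admissible_to_lieRinehart_rep
    {K A S M : Type*} [Field K] [CharZero K]
    [CommRing A] [Algebra K A]
    [LieRing S] [LieAlgebra K S]
    [AddCommGroup M] [Module K M] [Module A M]
    (β : S →ₗ[K] Module.End K A)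
    (hβder : ∀ (x : S) (a b : A), β x (a * b) = β x a * b + a * β x b)
    (hβhom : ∀ (x y : S) (a : A), β ⁅x, y⁆ a = β x (β y a) - β y (β x a))
    (ρ : S →ₗ[K] Module.End K M)
    (hρhom : ∀ (x y : S) (m : M), ρ ⁅x, y⁆ m = ρ x (ρ y m) - ρ y (ρ x m))
    (hρmod : ∀ (x : S) (a : A) (m : M), ρ x (a • m) = a • ρ x m + β x a • m)
    -- the bracket on `S ⊗ A`
    (br : (S ⊗[K] A) →ₗ[K] (S ⊗[K] A) →ₗ[K] (S ⊗[K] A))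
    (hbr : ∀ (x y : S) (a b : A),
      br (x ⊗ₜ a) (y ⊗ₜ b) =
        ⁅x, y⁆ ⊗ₜ (a * b) + y ⊗ₜ (a * β x b) - x ⊗ₜ (b * β y a))
    -- the `A`-module structure on `S ⊗ A`
    (mod : A → (S ⊗[K] A) →ₗ[K] (S ⊗[K] A))
    (hmod : ∀ (a : A) (x : S) (b : A), mod a (x ⊗ₜ b) = x ⊗ₜ (a * b))
    -- the anchor on `S ⊗ A`
    (αm : (S ⊗[K] A) →ₗ[K] Module.End K A)
    (hαm : ∀ (x : S) (a b : A), αm (x ⊗ₜ a) b = a * β x b)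
    -- the map `ρ̄ : S ⊗ A → gl_K(M)`, `ρ̄(x ⊗ a) = a ρ(x)`
    (ρb : (S ⊗[K] A) →ₗ[K] Module.End K M)
    (hρb : ∀ (x : S) (a : A) (m : M), ρb (x ⊗ₜ a) m = a • ρ x m) :
    (∀ (t s : S ⊗[K] A) (m : M), ρb (br t s) m = ρb t (ρb s m) - ρb s (ρb t m)) ∧
    (∀ (a : A) (t : S ⊗[K] A) (m : M), ρb (mod a t) m = a • ρb t m) ∧
    (∀ (t : S ⊗[K] A) (b : A) (m : M), ρb t (b • m) = b • ρb t m + αm t b • m) :=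
  admissible_to_lieRinehart_rep_general β ρ hρhom hρmod br hbr mod hmod αm hαm ρb hρb
end

section
/- For the Witt algebra W_n = Der(C[x_1^{±1},...,x_n^{±1}]) with basis {x^r d_i} (where d_i = x_i ∂_i), the linear map H : W_n → gl_n ⊗ A_n defined by H(x^r d_j) = Σ_{i=1}^n r_i E_{ij} ⊗ x^r is a crossed homomorphism from W_n to gl_n ⊗ A_n with respect to the action ρ(w)(E ⊗ a) = E ⊗ w(a). -/
open scoped TensorProduct

/-!
Writing `col r j` for the rank-one matrix `r e_jᵀ` (its `j`-th column is `r`), the map is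
`H (x^r d_j) = col r j ⊗ x^r`. Both sides of the crossed-homomorphism identity are bilinear,
so it suffices to check it on basis elements `x^r d_i`, `x^s d_j`. There every term is a
matrix tensored with `x^{r+s}`, and since `col` is additive in `r` the identity reduces to
`⁅r e_iᵀ, s e_jᵀ⁆ = s_i r e_jᵀ - r_j s e_iᵀ`.
-/

namespace Matrix

variable {n α : Type*} [Fintype n] [DecidableEq n]

theorem sum_smul_single_eq_vecMulVec [Semiring α] (u : n → α) (j : n) :
    ∑ i, u i • single i j (1 : α) = vecMulVec u (Pi.single j 1) := by
  ext k l
  simp [sum_apply, single_apply, vecMulVec_apply, Pi.single_apply, ite_and, eq_comm]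

theorem lie_vecMulVec_single [CommRing α] (u v : n → α) (i j : n) :
    ⁅vecMulVec u (Pi.single i 1), vecMulVec v (Pi.single j 1)⁆ =
      v i • vecMulVec u (Pi.single j 1) - u j • vecMulVec v (Pi.single i 1) := by
  rw [Ring.lie_def, vecMulVec_mul_vecMulVec, vecMulVec_mul_vecMulVec, single_dotProduct,
    single_dotProduct, one_mul, one_mul, vecMulVec_smul, vecMulVec_smul]

end Matrix

theorem crossed_hom_identity_of_span_eq_top {R W V : Type*} [CommRing R] [LieRing W]
    [LieAlgebra R W] [AddCommGroup V] [Module R V] (H : W →ₗ[R] V)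
    (ρ : W →ₗ[R] Module.End R V) (br : V →ₗ[R] V →ₗ[R] V) {s : Set W}
    (hs : Submodule.span R s = ⊤)
    (h : ∀ x ∈ s, ∀ y ∈ s, H ⁅x, y⁆ = ρ x (H y) - ρ y (H x) + br (H x) (H y))
    (w w' : W) : H ⁅w, w'⁆ = ρ w (H w') - ρ w' (H w) + br (H w) (H w') := by
  induction (hs ▸ Submodule.mem_top : w ∈ Submodule.span R s),
    (hs ▸ Submodule.mem_top : w' ∈ Submodule.span R s) using Submodule.span_induction₂ with
  | mem_mem x y hx hy => exact h x hx y hy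
  | zero_left => simp
  | zero_right => simp
  | add_left x y z _ _ _ hx hy =>
    simp only [add_lie, map_add, LinearMap.add_apply, hx, hy]; abel
  | add_right x y z _ _ _ hx hy =>
    simp only [lie_add, map_add, LinearMap.add_apply, hx, hy]; abel
  | smul_left c x y _ _ hxy =>
    simp only [smul_lie, map_smul, LinearMap.smul_apply, hxy, smul_sub, smul_add]
  | smul_right c x y _ _ hxy =>
    simp only [lie_smul, map_smul, LinearMap.smul_apply, hxy, smul_sub, smul_add]

theorem witt_crossed_hom_general (n : ℕ)
    {A W : Type*} [CommRing A] [Algebra ℂ A]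
    [LieRing W] [LieAlgebra ℂ W]
    -- the basis `x^r d_i` of the Witt algebra and its structure constants
    (e : (Fin n → ℤ) → Fin n → W)
    (hspan : Submodule.span ℂ
      (Set.range fun p : (Fin n → ℤ) × Fin n => e p.1 p.2) = ⊤)
    (hbracket : ∀ (r s : Fin n → ℤ) (i j : Fin n),
      ⁅e r i, e s j⁆ = (s i) • e (r + s) j - (r j) • e (r + s) i)
    -- the Laurent monomials `x^r` of `A`
    (xr : (Fin n → ℤ) → A)
    (hxr : ∀ r s : Fin n → ℤ, xr r * xr s = xr (r + s))
    -- the (derivation) action `D` of `W` on `A`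
    (D : W →ₗ[ℂ] Module.End ℂ A)
    (hD : ∀ (r s : Fin n → ℤ) (i : Fin n),
      D (e r i) (xr s) = ((s i : ℂ)) • xr (r + s))
    -- the Lie bracket on `gl_n ⊗ A`
    (br : (Matrix (Fin n) (Fin n) ℂ ⊗[ℂ] A) →ₗ[ℂ]
      (Matrix (Fin n) (Fin n) ℂ ⊗[ℂ] A) →ₗ[ℂ] (Matrix (Fin n) (Fin n) ℂ ⊗[ℂ] A))
    (hbr : ∀ (E F : Matrix (Fin n) (Fin n) ℂ) (a b : A),
      br (E ⊗ₜ a) (F ⊗ₜ b) = ⁅E, F⁆ ⊗ₜ (a * b))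
    -- the action of `W` on `gl_n ⊗ A` through the second tensor factor
    (ρ : W →ₗ[ℂ] Module.End ℂ (Matrix (Fin n) (Fin n) ℂ ⊗[ℂ] A))
    (hρ : ∀ (w : W) (E : Matrix (Fin n) (Fin n) ℂ) (a : A),
      ρ w (E ⊗ₜ a) = E ⊗ₜ D w a)
    -- the map `H`
    (H : W →ₗ[ℂ] (Matrix (Fin n) (Fin n) ℂ ⊗[ℂ] A))
    (hHdef : ∀ (r : Fin n → ℤ) (j : Fin n),
      H (e r j) = ∑ i : Fin n, ((r i : ℂ)) • (Matrix.single i j (1 : ℂ) ⊗ₜ xr r)) :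
    ∀ w w' : W, H ⁅w, w'⁆ = ρ w (H w') - ρ w' (H w) + br (H w) (H w') := by
  let col (r : Fin n → ℤ) (j : Fin n) : Matrix (Fin n) (Fin n) ℂ :=
    Matrix.vecMulVec (fun k => (r k : ℂ)) (Pi.single j 1)
  have hH (r : Fin n → ℤ) (j : Fin n) : H (e r j) = col r j ⊗ₜ xr r := by
    simp only [hHdef, TensorProduct.smul_tmul', ← TensorProduct.sum_tmul,
      Matrix.sum_smul_single_eq_vecMulVec, col]
  have hcol_add (r s : Fin n → ℤ) (j : Fin n) : col (r + s) j = col r j + col s j := by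
    simp only [col, Pi.add_apply, Int.cast_add, ← Matrix.add_vecMulVec]; rfl
  have hcol_lie (r s : Fin n → ℤ) (i j : Fin n) :
      ⁅col r i, col s j⁆ = (s i : ℂ) • col r j - (r j : ℂ) • col s i :=
    Matrix.lie_vecMulVec_single _ _ i j
  refine crossed_hom_identity_of_span_eq_top H ρ br hspan ?_
  rintro _ ⟨⟨r, i⟩, rfl⟩ _ ⟨⟨s, j⟩, rfl⟩
  rw [hbracket, map_sub, map_zsmul, map_zsmul, hH, hH, hH, hH, hρ, hρ, hbr, hD, hD, hxr,
    add_comm s r, hcol_lie, hcol_add, hcol_add]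
  simp only [← Int.cast_smul_eq_zsmul ℂ, TensorProduct.tmul_smul, TensorProduct.add_tmul,
    TensorProduct.sub_tmul, ← TensorProduct.smul_tmul']
  module

/-- for the Witt algebra `W_n = Der(ℂ[x₁^{±1},…,x_n^{±1}])`, spanned by
the basis elements `e r i = x^r d_i` (`r ∈ ℤⁿ`, `1 ≤ i ≤ n`) with bracket
`⁅x^r d_i, x^s d_j⁆ = s_i x^{r+s} d_j − r_j x^{r+s} d_i`, acting on the Laurent
polynomial algebra `A` (with monomials `xr r = x^r`, `x^r d_i (x^s) = s_i x^{r+s}`),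
the linear map `H : W_n → gl_n ⊗ A` defined on the basis by
`H (x^r d_j) = ∑ i, r_i E_{ij} ⊗ x^r` is a crossed homomorphism with respect to the
action `ρ(w)(E ⊗ a) = E ⊗ w(a)`, where `gl_n ⊗ A` carries the bracket
`⁅E ⊗ a, F ⊗ b⁆ = ⁅E, F⁆ ⊗ ab`. -/
theorem witt_crossed_hom (n : ℕ)
    {A W : Type*} [CommRing A] [Algebra ℂ A]
    [LieRing W] [LieAlgebra ℂ W]
    -- the basis `x^r d_i` of the Witt algebra and its structure constants
    (e : (Fin n → ℤ) → Fin n → W)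
    (hspan : Submodule.span ℂ
      (Set.range fun p : (Fin n → ℤ) × Fin n => e p.1 p.2) = ⊤)
    (hbracket : ∀ (r s : Fin n → ℤ) (i j : Fin n),
      ⁅e r i, e s j⁆ = (s i) • e (r + s) j - (r j) • e (r + s) i)
    -- the Laurent monomials `x^r` of `A`
    (xr : (Fin n → ℤ) → A)
    (hxr : ∀ r s : Fin n → ℤ, xr r * xr s = xr (r + s))
    -- the (derivation) action `D` of `W` on `A`
    (D : W →ₗ[ℂ] Module.End ℂ A)
    (hDder : ∀ (w : W) (a b : A), D w (a * b) = D w a * b + a * D w b)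
    (hDhom : ∀ (w w' : W) (a : A), D ⁅w, w'⁆ a = D w (D w' a) - D w' (D w a))
    (hD : ∀ (r s : Fin n → ℤ) (i : Fin n),
      D (e r i) (xr s) = ((s i : ℂ)) • xr (r + s))
    -- the Lie bracket on `gl_n ⊗ A`
    (br : (Matrix (Fin n) (Fin n) ℂ ⊗[ℂ] A) →ₗ[ℂ]
      (Matrix (Fin n) (Fin n) ℂ ⊗[ℂ] A) →ₗ[ℂ] (Matrix (Fin n) (Fin n) ℂ ⊗[ℂ] A))
    (hbr : ∀ (E F : Matrix (Fin n) (Fin n) ℂ) (a b : A),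
      br (E ⊗ₜ a) (F ⊗ₜ b) = ⁅E, F⁆ ⊗ₜ (a * b))
    -- the action of `W` on `gl_n ⊗ A` through the second tensor factor
    (ρ : W →ₗ[ℂ] Module.End ℂ (Matrix (Fin n) (Fin n) ℂ ⊗[ℂ] A))
    (hρ : ∀ (w : W) (E : Matrix (Fin n) (Fin n) ℂ) (a : A),
      ρ w (E ⊗ₜ a) = E ⊗ₜ D w a)
    -- the map `H`
    (H : W →ₗ[ℂ] (Matrix (Fin n) (Fin n) ℂ ⊗[ℂ] A))
    (hHdef : ∀ (r : Fin n → ℤ) (j : Fin n),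
      H (e r j) = ∑ i : Fin n, ((r i : ℂ)) • (Matrix.single i j (1 : ℂ) ⊗ₜ xr r)) :
    ∀ w w' : W, H ⁅w, w'⁆ = ρ w (H w') - ρ w' (H w) + br (H w) (H w') :=
  witt_crossed_hom_general n e hspan hbracket xr hxr D hD br hbr ρ hρ H hHdef
end

section
/- Let A be a commutative C-algebra, Δ a space of commuting C-derivations of A such that AΔ is a free A-module with basis ∂_1,...,∂_n. The linear map H : W_n(A,Δ) → gl_n ⊗ A defined by H(Σ_i a_i ∂_i) = Σ_{i,j} E_{ij} ⊗ ∂_i(a_j) is a crossed homomorphism from W_n(A,Δ) to gl_n ⊗ A with respect to the action ρ(w)(E ⊗ a) = E ⊗ α(w)(a). -/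
/-!
Transport everything along `gl_n ⊗ A ≃ Matrix (Fin n) (Fin n) A`. There `H a` becomes the
Jacobian matrix `(∂ᵢ aⱼ)`, the action `ρ` acts entrywise, and, `A` being commutative, the
bracket becomes the matrix commutator. The identity is then checked entrywise: by the Leibniz
rule `∂_p (aᵢ ∂ᵢ b_q) = ∂_p aᵢ ∂ᵢ b_q + aᵢ ∂_p ∂ᵢ b_q`, where the first summand is an entry of
`H a * H b` and, since the derivations commute, the second one is a term of `ρ(a)(H b)`.
-/

open scoped TensorProduct

section

variable {A : Type*} [CommRing A] [Algebra ℂ A] {n : ℕ}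

/-- The bracket of the generalized Witt algebra `W_n(A, Δ)`, identified with `Fin n → A`
through the free basis `∂_1, …, ∂_n`: `⁅∑ aᵢ∂ᵢ, ∑ bⱼ∂ⱼ⁆ = ∑ (∑ᵢ aᵢ∂ᵢ(b_k) − bᵢ∂ᵢ(a_k)) ∂_k`. -/
def wittBracket (der : Fin n → Module.End ℂ A) (a b : Fin n → A) : Fin n → A :=
  fun k => ∑ i : Fin n, (a i * der i (b k) - b i * der i (a k))

/-- The anchor `α(∑ aᵢ∂ᵢ) = ∑ aᵢ∂ᵢ ∈ Der(A)` of `W_n(A, Δ)` as a `ℂ`-linear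
endomorphism of `A`. -/
noncomputable def wittAct (der : Fin n → Module.End ℂ A) (a : Fin n → A) :
    Module.End ℂ A :=
  ∑ i : Fin n, (LinearMap.mulLeft ℂ (a i)) ∘ₗ der i

/-- The map `H(∑ᵢ aᵢ∂ᵢ) = ∑ᵢ ∑ⱼ E_{ij} ⊗ ∂ᵢ(aⱼ) : W_n(A,Δ) → gl_n ⊗ A`. -/
noncomputable def wittH (der : Fin n → Module.End ℂ A) (a : Fin n → A) :
    Matrix (Fin n) (Fin n) ℂ ⊗[ℂ] A :=
  ∑ i : Fin n, ∑ j : Fin n, Matrix.single i j (1 : ℂ) ⊗ₜ der i (a j)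

section matrixTensorEquiv

variable (ι R S : Type*) [Fintype ι] [DecidableEq ι] [CommSemiring R] [CommSemiring S]
  [Algebra R S]

noncomputable def matrixTensorEquiv : Matrix ι ι R ⊗[R] S ≃ₐ[R] Matrix ι ι S :=
  (Algebra.TensorProduct.comm R _ S).trans (matrixEquivTensor ι R S).symm

variable {ι R S}

theorem matrixTensorEquiv_tmul (E : Matrix ι ι R) (x : S) :
    matrixTensorEquiv ι R S (E ⊗ₜ x) = E.map (· • x) := by
  ext i j
  simp [matrixTensorEquiv, Algebra.smul_def, mul_comm]

theorem matrixTensorEquiv_single_tmul (i j : ι) (x : S) :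
    matrixTensorEquiv ι R S (Matrix.single i j 1 ⊗ₜ x) = Matrix.single i j x := by
  ext k l
  simp [matrixTensorEquiv_tmul, Matrix.single_apply, ite_smul]

theorem matrixTensorEquiv_lTensor (f : S →ₗ[R] S) (x : Matrix ι ι R ⊗[R] S) :
    matrixTensorEquiv ι R S (f.lTensor _ x) = (matrixTensorEquiv ι R S x).map f := by
  induction x using TensorProduct.induction_on with
  | zero => simp
  | tmul E y => ext i j; simp [matrixTensorEquiv_tmul]
  | add x y hx hy => simp only [map_add, hx, hy, Matrix.map_add f (map_add f)]

end matrixTensorEquiv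

theorem TensorProduct.eq_lie_of_apply_tmul_tmul {R M S : Type*} [CommSemiring R] [Ring M]
    [Algebra R M] [CommRing S] [Algebra R S] (br : M ⊗[R] S →ₗ[R] M ⊗[R] S →ₗ[R] M ⊗[R] S)
    (hbr : ∀ (E F : M) (a b : S), br (E ⊗ₜ a) (F ⊗ₜ b) = ⁅E, F⁆ ⊗ₜ (a * b))
    (x y : M ⊗[R] S) : br x y = ⁅x, y⁆ := by
  have h : br = LinearMap.mul R _ - (LinearMap.mul R _).flip := by
    refine TensorProduct.ext' fun E a => TensorProduct.ext' fun F b => ?_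
    simp [hbr, Ring.lie_def, mul_comm b, TensorProduct.sub_tmul]
  simp [h, Ring.lie_def]

def jacobian (der : Fin n → Module.End ℂ A) (a : Fin n → A) : Matrix (Fin n) (Fin n) A :=
  Matrix.of fun i j => der i (a j)

theorem matrixTensorEquiv_wittH (der : Fin n → Module.End ℂ A) (a : Fin n → A) :
    matrixTensorEquiv _ ℂ A (wittH der a) = jacobian der a := by
  simp only [wittH, map_sum, matrixTensorEquiv_single_tmul]
  rw [Matrix.matrix_eq_sum_single (jacobian der a)]
  rfl

theorem jacobian_wittBracket (der : Fin n → Module.End ℂ A)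
    (hder : ∀ (i : Fin n) (a b : A), der i (a * b) = der i a * b + a * der i b)
    (hcomm : ∀ (i j : Fin n) (a : A), der i (der j a) = der j (der i a)) (a b : Fin n → A) :
    jacobian der (wittBracket der a b) =
      (jacobian der b).map (wittAct der a) - (jacobian der a).map (wittAct der b) +
        ⁅jacobian der a, jacobian der b⁆ := by
  ext p q
  simp only [jacobian, wittBracket, wittAct, Matrix.of_apply, Matrix.add_apply,
    Matrix.sub_apply, Matrix.map_apply, Matrix.mul_apply, Ring.lie_def, LinearMap.coe_sum,
    LinearMap.coe_comp, Finset.sum_apply, Function.comp_apply, LinearMap.mulLeft_apply,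
    map_sub, map_sum, hder, hcomm p, Finset.sum_sub_distrib]
  rw [Finset.sum_add_distrib, Finset.sum_add_distrib]
  ring

/-- for a commutative `ℂ`-algebra `A` and commuting derivations
`∂_1, …, ∂_n` of `A` (a free `A`-basis of `AΔ`), the map
`H(∑ aᵢ∂ᵢ) = ∑_{i,j} E_{ij} ⊗ ∂ᵢ(aⱼ)` is a crossed homomorphism from the generalized
Witt algebra `W_n(A, Δ)` to `gl_n ⊗ A` with respect to the action
`ρ(w)(E ⊗ a) = E ⊗ α(w)(a)`, where `gl_n ⊗ A` has bracket `⁅E⊗a, F⊗b⁆ = ⁅E,F⁆ ⊗ ab`. -/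
theorem generalized_witt_crossed_hom
    (der : Fin n → Module.End ℂ A)
    (hder : ∀ (i : Fin n) (a b : A), der i (a * b) = der i a * b + a * der i b)
    (hcomm : ∀ (i j : Fin n) (a : A), der i (der j a) = der j (der i a))
    -- the Lie bracket on `gl_n ⊗ A`
    (br : (Matrix (Fin n) (Fin n) ℂ ⊗[ℂ] A) →ₗ[ℂ]
      (Matrix (Fin n) (Fin n) ℂ ⊗[ℂ] A) →ₗ[ℂ] (Matrix (Fin n) (Fin n) ℂ ⊗[ℂ] A))
    (hbr : ∀ (E F : Matrix (Fin n) (Fin n) ℂ) (a b : A),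
      br (E ⊗ₜ a) (F ⊗ₜ b) = ⁅E, F⁆ ⊗ₜ (a * b)) :
    ∀ a b : Fin n → A,
      wittH der (wittBracket der a b) =
        LinearMap.lTensor (Matrix (Fin n) (Fin n) ℂ) (wittAct der a) (wittH der b) -
          LinearMap.lTensor (Matrix (Fin n) (Fin n) ℂ) (wittAct der b) (wittH der a) +
          br (wittH der a) (wittH der b) := by
  intro a b
  rw [TensorProduct.eq_lie_of_apply_tmul_tmul br hbr]
  apply (matrixTensorEquiv (Fin n) ℂ A).injective
  rw [map_add, map_sub, Ring.lie_def, map_sub, map_mul, map_mul, ← Ring.lie_def]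
  simp only [matrixTensorEquiv_lTensor, matrixTensorEquiv_wittH]
  exact jacobian_wittBracket der hder hcomm a b

end
end

section
/- Let H : g → h be a crossed homomorphism with respect to ρ, and let d_{ρ_H} be the Chevalley-Eilenberg coboundary operator of the representation ρ_H(x)u = ρ(x)u + [H x, u]_h. Then for every f ∈ Hom(Λ^k g, h), d_{ρ_H} f = (−1)^{k−1} d_H f, where d_H = d + ⟦H, ·⟧ is the twisted differential on the dgLa (C*(g,h), ⟦·,·⟧, d). -/
/-!
A `(1, k)`-shuffle is determined by the image `i` of its first index, since the remaining
indices must fill the complement in increasing order; it is the cycle `(0 1 ⋯ i)⁻¹`, of sign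
`(-1)^i`. Hence `⟦H, f⟧(x) = (-1)^(k+1) ∑ᵢ (-1)^i ⁅H xᵢ, f(x without xᵢ)⁆`, which is
`(-1)^(k+1)` times the `⁅H xᵢ, ·⁆` part of `d_{ρ_H} f`, while `(-1)^(k+1) d f` is the `ρ` part
together with the `⁅xᵢ, xⱼ⁆` part.
-/


open scoped Classical

section

variable {K g h : Type*} [Field K] [CharZero K]
  [LieRing g] [LieAlgebra K g] [LieRing h] [LieAlgebra K h]

/-- `(m, n)`-shuffles: permutations of `Fin (m+n)` increasing on the first `m` and on
the last `n` indices. -/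
def IsShuffle (m n : ℕ) (σ : Equiv.Perm (Fin (m + n))) : Prop :=
  (∀ i j : Fin m, i < j → σ (Fin.castAdd n i) < σ (Fin.castAdd n j)) ∧
  (∀ i j : Fin n, i < j → σ (Fin.natAdd m i) < σ (Fin.natAdd m j))

/-- The graded bracket `⟦f₁, f₂⟧` on `C*(g, h) = ⊕ₖ Hom(Λᵏ g, h)`. -/
noncomputable def gBr {g h : Type*} [LieRing g] [LieRing h] {m n : ℕ}
    (f₁ : (Fin m → g) → h) (f₂ : (Fin n → g) → h) : (Fin (m + n) → g) → h :=
  fun x => ((-1 : ℤ) ^ (m * n + 1)) •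
    ∑ σ : Equiv.Perm (Fin (m + n)),
      if IsShuffle m n σ then
        ((Equiv.Perm.sign σ : ℤ)) •
          ⁅f₁ fun i => x (σ (Fin.castAdd n i)), f₂ fun i => x (σ (Fin.natAdd m i))⁆
      else 0

/-- The differential `d` on `C*(g, h)` determined by the action `ρ` (the value of
`d f` on `(x₁, …, x_{m+1})`, written using that `f` is alternating). -/
noncomputable def gD (ρ : g →ₗ[K] Module.End K h) {m : ℕ}
    (f : (Fin m → g) → h) : (Fin (m + 1) → g) → h :=
  fun x =>
    (∑ i : Fin (m + 1), ((-1 : ℤ) ^ (m + (i : ℕ) + 1)) • ρ (x i) (f (i.removeNth x))) +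
    ∑ j : Fin (m + 1), ∑ i : Fin (j : ℕ),
      ((-1 : ℤ) ^ (m + (j : ℕ) + 1)) •
        f (Function.update (j.removeNth x)
            ⟨(i : ℕ), by have := i.isLt; have := j.isLt; omega⟩
            ⁅x ⟨(i : ℕ), by have := i.isLt; have := j.isLt; omega⟩, x j⁆)

/-- Reindexing a cochain along an equality of arities. -/
def recast {g h : Type*} {a b : ℕ} (e : a = b)
    (f : (Fin a → g) → h) : (Fin b → g) → h :=
  fun x => f fun i => x (Fin.cast e i)

end

section ShuffleOneLeft

variable {k : ℕ}

lemma neg_one_pow_mul_neg_one_pow_add {R : Type*} [Monoid R] [HasDistribNeg R] (m n : ℕ) :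
    (-1 : R) ^ (m + 1) * (-1) ^ (m + n + 1) = (-1) ^ n := by
  rw [← pow_add, show m + 1 + (m + n + 1) = n + 2 * (m + 1) by ring, pow_add, pow_mul]
  simp

/-- The `(1, k)`-shuffle sending the first index to `i`. -/
def shufflePerm (k : ℕ) (i : Fin (k + 1)) : Equiv.Perm (Fin (1 + k)) :=
  (finCongr (Nat.add_comm 1 k).symm).permCongr i.cycleRange.symm

lemma cast_shufflePerm_castAdd (i : Fin (k + 1)) :
    Fin.cast (Nat.add_comm 1 k) (shufflePerm k i (Fin.castAdd k 0)) = i := by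
  have : Fin.cast (Nat.add_comm 1 k) (Fin.castAdd k (0 : Fin 1)) = 0 := by ext; simp
  simp [shufflePerm, Equiv.permCongr_apply, this, Fin.cycleRange_symm_zero]

lemma cast_shufflePerm_natAdd (i : Fin (k + 1)) (j : Fin k) :
    Fin.cast (Nat.add_comm 1 k) (shufflePerm k i (Fin.natAdd 1 j)) = i.succAbove j := by
  have : Fin.cast (Nat.add_comm 1 k) (Fin.natAdd 1 j) = j.succ := by ext; simp
  simp [shufflePerm, Equiv.permCongr_apply, this, Fin.cycleRange_symm_succ]

lemma sign_shufflePerm (i : Fin (k + 1)) :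
    (Equiv.Perm.sign (shufflePerm k i) : ℤ) = (-1) ^ (i : ℕ) := by
  simp [shufflePerm, Equiv.Perm.sign_permCongr, Fin.sign_cycleRange]

lemma isShuffle_shufflePerm (i : Fin (k + 1)) : IsShuffle 1 k (shufflePerm k i) := by
  refine ⟨fun a b hab => absurd (Subsingleton.elim a b ▸ hab) (lt_irrefl _), fun a b hab => ?_⟩
  rw [← Fin.cast_lt_cast (Nat.add_comm 1 k), cast_shufflePerm_natAdd, cast_shufflePerm_natAdd]
  exact Fin.strictMono_succAbove i hab

lemma IsShuffle.cast_apply_natAdd {σ : Equiv.Perm (Fin (1 + k))} (hσ : IsShuffle 1 k σ)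
    (j : Fin k) :
    Fin.cast (Nat.add_comm 1 k) (σ (Fin.natAdd 1 j)) =
      (Fin.cast (Nat.add_comm 1 k) (σ (Fin.castAdd k 0))).succAbove j := by
  set e := Nat.add_comm 1 k
  refine congrFun ((StrictMono.range_inj (f := fun j => Fin.cast e (σ (Fin.natAdd 1 j)))
    (fun a b hab => ?_) (Fin.strictMono_succAbove _)).1 ?_) j
  · exact (Fin.cast_lt_cast e).2 (hσ.2 a b hab)
  ext b
  rw [Fin.range_succAbove, Set.mem_compl_singleton_iff, Set.mem_range]
  constructor
  · rintro ⟨j, rfl⟩ hj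
    simpa [Fin.ext_iff] using σ.injective (Fin.cast_injective e hj)
  · intro hb
    obtain ⟨c, hc⟩ := σ.surjective (Fin.cast e.symm b)
    cases c using Fin.addCases with
    | left i => exact absurd (by rw [← Subsingleton.elim i 0, hc]; simp) hb
    | right j => exact ⟨j, by rw [hc]; simp⟩

lemma IsShuffle.eq_shufflePerm {σ : Equiv.Perm (Fin (1 + k))} (hσ : IsShuffle 1 k σ) :
    σ = shufflePerm k (Fin.cast (Nat.add_comm 1 k) (σ (Fin.castAdd k 0))) := by
  refine Equiv.ext fun c => Fin.cast_injective (Nat.add_comm 1 k) ?_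
  cases c using Fin.addCases with
  | left i => rw [Subsingleton.elim i 0, cast_shufflePerm_castAdd]
  | right j => rw [cast_shufflePerm_natAdd, hσ.cast_apply_natAdd]

lemma sum_isShuffle_one_left {M : Type*} [AddCommMonoid M] (F : Equiv.Perm (Fin (1 + k)) → M) :
    (∑ σ : Equiv.Perm (Fin (1 + k)), if IsShuffle 1 k σ then F σ else 0) =
      ∑ i : Fin (k + 1), F (shufflePerm k i) := by
  have hshuffles : Finset.univ.filter (IsShuffle 1 k) = Finset.univ.image (shufflePerm k) := by
    ext σ
    simp only [Finset.mem_filter, Finset.mem_univ, true_and, Finset.mem_image]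
    exact ⟨fun hσ => ⟨_, hσ.eq_shufflePerm.symm⟩, by rintro ⟨i, rfl⟩; exact isShuffle_shufflePerm i⟩
  rw [← Finset.sum_filter, hshuffles, Finset.sum_image]
  intro i _ j _ hij
  rw [← cast_shufflePerm_castAdd i, hij, cast_shufflePerm_castAdd]

end ShuffleOneLeft

section Cochains

variable {K g h : Type*} [Field K] [LieRing g] [LieAlgebra K g] [LieRing h] [LieAlgebra K h]

lemma neg_one_pow_smul_gD_apply (ρ : g →ₗ[K] Module.End K h) {m : ℕ}
    (f : (Fin m → g) → h) (x : Fin (m + 1) → g) :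
    ((-1 : ℤ) ^ (m + 1)) • gD ρ f x =
      (∑ i : Fin (m + 1), ((-1 : ℤ) ^ (i : ℕ)) • ρ (x i) (f (i.removeNth x))) +
      ∑ j : Fin (m + 1), ∑ i : Fin (j : ℕ),
        ((-1 : ℤ) ^ (j : ℕ)) •
          f (Function.update (j.removeNth x)
              ⟨(i : ℕ), by have := i.isLt; have := j.isLt; omega⟩
              ⁅x ⟨(i : ℕ), by have := i.isLt; have := j.isLt; omega⟩, x j⁆) := by
  simp only [gD, smul_add, Finset.smul_sum, smul_smul, neg_one_pow_mul_neg_one_pow_add]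

lemma neg_one_pow_smul_recast_gBr_apply {k : ℕ}
    (φ : g → h) (f : (Fin k → g) → h) (x : Fin (k + 1) → g) :
    ((-1 : ℤ) ^ (k + 1)) • recast (Nat.add_comm 1 k) (gBr (fun y : Fin 1 → g => φ (y 0)) f) x =
      ∑ i : Fin (k + 1), ((-1 : ℤ) ^ (i : ℕ)) • ⁅φ (x i), f (i.removeNth x)⁆ := by
  simp only [recast, gBr, sum_isShuffle_one_left, smul_smul, one_mul]
  rw [neg_one_pow_mul_neg_one_pow_add k 0, pow_zero, one_smul]
  refine Finset.sum_congr rfl fun i _ => ?_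
  simp only [sign_shufflePerm, cast_shufflePerm_castAdd, cast_shufflePerm_natAdd]
  rfl

end Cochains

section

variable {K g h : Type*} [Field K] [CharZero K]
  [LieRing g] [LieAlgebra K g] [LieRing h] [LieAlgebra K h]

/-- The Chevalley–Eilenberg coboundary operator of the representation
`ρ_H x u = ρ x u + ⁅H x, u⁆` on `h` (the value on `(x₁, …, x_{k+1})`, written using
that `f` is alternating). -/
noncomputable def gDH (ρ : g →ₗ[K] Module.End K h) (H : g →ₗ[K] h) {k : ℕ}
    (f : (Fin k → g) → h) : (Fin (k + 1) → g) → h :=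
  fun x =>
    (∑ i : Fin (k + 1), ((-1 : ℤ) ^ (i : ℕ)) •
      (ρ (x i) (f (i.removeNth x)) + ⁅H (x i), f (i.removeNth x)⁆)) +
    ∑ j : Fin (k + 1), ∑ i : Fin (j : ℕ),
      ((-1 : ℤ) ^ (j : ℕ)) •
        f (Function.update (j.removeNth x)
            ⟨(i : ℕ), by have := i.isLt; have := j.isLt; omega⟩
            ⁅x ⟨(i : ℕ), by have := i.isLt; have := j.isLt; omega⟩, x j⁆)

theorem ce_coboundary_eq_twisted_differential_general
    (ρ : g →ₗ[K] Module.End K h)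
    (H : g →ₗ[K] h) :
    ∀ (k : ℕ) (f : AlternatingMap K g h (Fin k)),
      gDH ρ H (⇑f) =
        ((-1 : ℤ) ^ (k + 1)) •
          (gD ρ (⇑f) +
            recast (Nat.add_comm 1 k)
              (gBr (fun x : Fin 1 → g => H (x 0)) (⇑f))) := by
  intro k f
  funext x
  rw [Pi.smul_apply, Pi.add_apply, smul_add, neg_one_pow_smul_gD_apply,
    neg_one_pow_smul_recast_gBr_apply]
  simp only [gDH, smul_add, Finset.sum_add_distrib]
  abel

/-- for a crossed homomorphism `H : g → h` with respect to `ρ`, the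
Chevalley–Eilenberg coboundary `d_{ρ_H}` of the representation `ρ_H` and the twisted
differential `d_H = d + ⟦H, ·⟧` of the dgLa `(C*(g,h), ⟦·,·⟧, d)` are related by
`d_{ρ_H} f = (−1)^{k−1} d_H f` for every `f ∈ Hom(Λᵏ g, h)`. -/
theorem ce_coboundary_eq_twisted_differential
    (ρ : g →ₗ[K] Module.End K h)
    (hder : ∀ (x : g) (u v : h), ρ x ⁅u, v⁆ = ⁅ρ x u, v⁆ + ⁅u, ρ x v⁆)
    (hhom : ∀ (x y : g) (u : h), ρ ⁅x, y⁆ u = ρ x (ρ y u) - ρ y (ρ x u))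
    (H : g →ₗ[K] h)
    (hH : ∀ x y : g, H ⁅x, y⁆ = ρ x (H y) - ρ y (H x) + ⁅H x, H y⁆) :
    ∀ (k : ℕ) (f : AlternatingMap K g h (Fin k)),
      gDH ρ H (⇑f) =
        ((-1 : ℤ) ^ (k + 1)) •
          (gD ρ (⇑f) +
            recast (Nat.add_comm 1 k)
              (gBr (fun x : Fin 1 → g => H (x 0)) (⇑f))) :=
  ce_coboundary_eq_twisted_differential_general ρ H

end
end

section
/- Let H : g → h be a crossed homomorphism with respect to ρ and 𝔥 : g → h a linear map. Then H_t = H + t𝔥 is a crossed homomorphism with respect to ρ for all t ∈ K if and only if: (1) ρ(x)𝔥(y) − ρ(y)𝔥(x) + [H x, 𝔥 y]_h + [𝔥 x, H y]_h − 𝔥[x,y]_g = 0 and (2) [𝔥 x, 𝔥 y]_h = 0, for all x, y ∈ g. -/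
/-!
The defect `ρ x (H y) - ρ y (H x) + ⁅H x, H y⁆ - H ⁅x, y⁆` of being a crossed homomorphism
is quadratic in `H`. Along the line `H + t • 𝔥` it is therefore a polynomial in `t` of degree
at most two, whose constant term vanishes because `H` is a crossed homomorphism, whose linear
coefficient is the `ρ_H`-cocycle defect of `𝔥` and whose quadratic coefficient is `⁅𝔥 x, 𝔥 y⁆`.
A vector-valued polynomial of this shape vanishes for all `t` iff both coefficients vanish,
which only needs the two values `t = 1, 2`.
-/

section CrossedHom

variable {K g h : Type*} [CommRing K] [LieRing g] [LieAlgebra K g] [LieRing h] [LieAlgebra K h]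

def crossedDefect (ρ : g →ₗ[K] Module.End K h) (H : g →ₗ[K] h) (x y : g) : h :=
  ρ x (H y) - ρ y (H x) + ⁅H x, H y⁆ - H ⁅x, y⁆

def cocycleDefect (ρ : g →ₗ[K] Module.End K h) (H 𝔥 : g →ₗ[K] h) (x y : g) : h :=
  ρ x (𝔥 y) - ρ y (𝔥 x) + ⁅H x, 𝔥 y⁆ + ⁅𝔥 x, H y⁆ - 𝔥 ⁅x, y⁆

theorem crossedDefect_eq_zero_iff (ρ : g →ₗ[K] Module.End K h) (H : g →ₗ[K] h) (x y : g) :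
    crossedDefect ρ H x y = 0 ↔ H ⁅x, y⁆ = ρ x (H y) - ρ y (H x) + ⁅H x, H y⁆ := by
  rw [crossedDefect, sub_eq_zero, eq_comm]

theorem crossedDefect_add_smul (ρ : g →ₗ[K] Module.End K h) (H 𝔥 : g →ₗ[K] h) (t : K)
    (x y : g) :
    crossedDefect ρ (H + t • 𝔥) x y =
      crossedDefect ρ H x y + t • cocycleDefect ρ H 𝔥 x y + t ^ 2 • ⁅𝔥 x, 𝔥 y⁆ := by
  simp only [crossedDefect, cocycleDefect, LinearMap.add_apply, LinearMap.smul_apply, map_add,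
    map_smul, lie_add, add_lie, smul_lie, lie_smul]
  module

end CrossedHom

theorem forall_smul_add_sq_smul_eq_zero_iff {K M : Type*} [Field K] [AddCommGroup M]
    [Module K M] (h2 : (2 : K) ≠ 0) {a b : M} :
    (∀ t : K, t • a + t ^ 2 • b = 0) ↔ a = 0 ∧ b = 0 := by
  refine ⟨fun hab => ?_, fun ⟨ha, hb⟩ t => by simp [ha, hb]⟩
  have h1 := hab 1
  have hb : b = 0 := by
    have h2b : (2 : K) • b = 0 := by linear_combination (norm := module) hab 2 - (2 : K) • h1
    exact (smul_eq_zero.mp h2b).resolve_left h2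
  exact ⟨by simpa [hb] using h1, hb⟩

theorem linear_deformation_iff_general
    {K g h : Type*} [Field K] [CharZero K]
    [LieRing g] [LieAlgebra K g] [LieRing h] [LieAlgebra K h]
    (ρ : g →ₗ[K] Module.End K h)
    (H : g →ₗ[K] h)
    (hH : ∀ x y : g, H ⁅x, y⁆ = ρ x (H y) - ρ y (H x) + ⁅H x, H y⁆)
    (𝔥 : g →ₗ[K] h) :
    (∀ (t : K) (x y : g),
      (H + t • 𝔥) ⁅x, y⁆ =
        ρ x ((H + t • 𝔥) y) - ρ y ((H + t • 𝔥) x) + ⁅(H + t • 𝔥) x, (H + t • 𝔥) y⁆) ↔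
    ((∀ x y : g,
        ρ x (𝔥 y) - ρ y (𝔥 x) + ⁅H x, 𝔥 y⁆ + ⁅𝔥 x, H y⁆ - 𝔥 ⁅x, y⁆ = 0) ∧
      (∀ x y : g, ⁅𝔥 x, 𝔥 y⁆ = 0)) := by
  have expand : ∀ (t : K) (x y : g),
      (H + t • 𝔥) ⁅x, y⁆ =
          ρ x ((H + t • 𝔥) y) - ρ y ((H + t • 𝔥) x) + ⁅(H + t • 𝔥) x, (H + t • 𝔥) y⁆ ↔
        t • cocycleDefect ρ H 𝔥 x y + t ^ 2 • ⁅𝔥 x, 𝔥 y⁆ = 0 := fun t x y => by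
    rw [← crossedDefect_eq_zero_iff, crossedDefect_add_smul,
      (crossedDefect_eq_zero_iff ρ H x y).mpr (hH x y), zero_add]
  simp only [expand]
  refine ⟨fun hyp => ?_, fun ⟨hcocycle, habelian⟩ t x y => ?_⟩
  · have coeffs x y :=
      (forall_smul_add_sq_smul_eq_zero_iff (two_ne_zero' K)).mp (hyp · x y)
    exact ⟨fun x y => (coeffs x y).1, fun x y => (coeffs x y).2⟩
  · exact (forall_smul_add_sq_smul_eq_zero_iff (two_ne_zero' K)).mpr ⟨hcocycle x y, habelian x y⟩ t

/-- for a crossed homomorphism `H` and a linear map `𝔥 : g → h`,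
`H_t = H + t 𝔥` is a crossed homomorphism for all `t ∈ K` if and only if `𝔥` is a
1-cocycle for `ρ_H` and has abelian image bracket, i.e. conditions (1) and (2). -/
theorem linear_deformation_iff
    {K g h : Type*} [Field K] [CharZero K]
    [LieRing g] [LieAlgebra K g] [LieRing h] [LieAlgebra K h]
    (ρ : g →ₗ[K] Module.End K h)
    (hder : ∀ (x : g) (u v : h), ρ x ⁅u, v⁆ = ⁅ρ x u, v⁆ + ⁅u, ρ x v⁆)
    (hhom : ∀ (x y : g) (u : h), ρ ⁅x, y⁆ u = ρ x (ρ y u) - ρ y (ρ x u))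
    (H : g →ₗ[K] h)
    (hH : ∀ x y : g, H ⁅x, y⁆ = ρ x (H y) - ρ y (H x) + ⁅H x, H y⁆)
    (𝔥 : g →ₗ[K] h) :
    (∀ (t : K) (x y : g),
      (H + t • 𝔥) ⁅x, y⁆ =
        ρ x ((H + t • 𝔥) y) - ρ y ((H + t • 𝔥) x) + ⁅(H + t • 𝔥) x, (H + t • 𝔥) y⁆) ↔
    ((∀ x y : g,
        ρ x (𝔥 y) - ρ y (𝔥 x) + ⁅H x, 𝔥 y⁆ + ⁅𝔥 x, H y⁆ - 𝔥 ⁅x, y⁆ = 0) ∧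
      (∀ x y : g, ⁅𝔥 x, 𝔥 y⁆ = 0)) :=
  linear_deformation_iff_general ρ H hH 𝔥
end
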